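/- For any polynomial u of degree at most p on a bounded open interval T = (a,b), the sup-norm of u on T is bounded by (p+1)/sqrt(|T|) times the L²-norm of u on T, i.e. ‖u‖_{L^∞(T)} ≤ (p+1)/√(b−a) · ‖u‖_{L²(T)}. -/

import Mathlib

/-!
On `[0, 1]` the shifted Legendre polynomials `L k` are orthogonal, with `L k 0 = 1` and
`∫ (L k)² = 1 / (2k + 1)`. Expanding `P` in them, Cauchy–Schwarz gives
`P(0)² ≤ (∑_{k ≤ p} (2k + 1)) ∫ P² = (p + 1)² ∫ P²`; the expansion is carried out one
Legendre component at a time, by induction on `p`. After an affine change of variables this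
reads `P(t)² |J| ≤ (p + 1)² ∫_J P²` for either endpoint `t` of an interval `J`, and adding
the inequalities for `J = [a, t]` and `J = [t, b]` bounds `P(t)² (b - a)` by
`(p + 1)² ∫_a^b P²`.
-/

open Polynomial
open scoped Nat

namespace Polynomial

theorem natDegree_sub_C_mul_le_of_natDegree_eq {K : Type*} [Field K] {P L : K[X]} {n : ℕ}
    (hL : L.natDegree = n + 1) (hP : P.natDegree ≤ n + 1) :
    (P - C (P.coeff (n + 1) / L.coeff (n + 1)) * L).natDegree ≤ n := by
  have hLc : L.coeff (n + 1) ≠ 0 := by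
    rw [← hL]
    exact leadingCoeff_ne_zero.mpr (by rintro rfl; simp at hL)
  rw [natDegree_le_iff_coeff_eq_zero]
  intro N hN
  rw [coeff_sub, coeff_C_mul]
  rcases (Nat.succ_le_of_lt hN).eq_or_lt with rfl | hlt
  · rw [div_mul_cancel₀ _ hLc, sub_self]
  · rw [coeff_eq_zero_of_natDegree_lt (hP.trans_lt hlt),
      coeff_eq_zero_of_natDegree_lt (hL.trans_lt hlt), mul_zero, sub_zero]

theorem iterate_derivative_eq_C_of_natDegree_le {R : Type*} [CommSemiring R] {P : R[X]} {n : ℕ}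
    (hP : P.natDegree ≤ n) : derivative^[n] P = C (n ! * P.coeff n) := by
  have hdeg : (derivative^[n] P).natDegree ≤ 0 :=
    (natDegree_iterate_derivative P n).trans (Nat.sub_eq_zero_of_le hP).le
  rw [eq_C_of_natDegree_le_zero hdeg, coeff_iterate_derivative, zero_add,
    Nat.descFactorial_self, nsmul_eq_mul]

theorem integral_eval_mul_eval_derivative (Q W : ℝ[X]) (a b : ℝ) :
    ∫ x in a..b, Q.eval x * (derivative W).eval x
      = Q.eval b * W.eval b - Q.eval a * W.eval a
        - ∫ x in a..b, (derivative Q).eval x * W.eval x :=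
  intervalIntegral.integral_mul_deriv_eq_deriv_mul (fun x _ ↦ Q.hasDerivAt x)
    (fun x _ ↦ W.hasDerivAt x) ((derivative Q).continuous.intervalIntegrable _ _)
    ((derivative W).continuous.intervalIntegrable _ _)

theorem integral_eval_mul_eval_iterate_derivative (Q W : ℝ[X]) {a b : ℝ} {n : ℕ}
    (ha : (X - C a) ^ n ∣ W) (hb : (X - C b) ^ n ∣ W) :
    ∫ x in a..b, Q.eval x * (derivative^[n] W).eval x
      = (-1) ^ n * ∫ x in a..b, (derivative^[n] Q).eval x * W.eval x := by
  induction n generalizing Q with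
  | zero => simp
  | succ n ih =>
    have hroot : ∀ r, (X - C r) ^ (n + 1) ∣ W → (derivative^[n] W).eval r = 0 := fun r hr ↦
      dvd_iff_isRoot.mp <| by
        simpa using pow_sub_dvd_iterate_derivative_of_pow_dvd n hr
    rw [Function.iterate_succ_apply', integral_eval_mul_eval_derivative, hroot a ha, hroot b hb,
      ih (derivative Q) ((pow_dvd_pow _ n.le_succ).trans ha)
        ((pow_dvd_pow _ n.le_succ).trans hb), Function.iterate_succ_apply]
    ring

end Polynomial

theorem integral_pow_mul_one_sub_pow (m n : ℕ) :
    ∫ x in (0 : ℝ)..1, x ^ m * (1 - x) ^ n = m ! * n ! / (m + n + 1)! := by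
  induction n generalizing m with
  | zero =>
    simp only [pow_zero, mul_one, integral_pow, one_pow, zero_pow m.succ_ne_zero, sub_zero,
      add_zero, Nat.factorial_zero, Nat.factorial_succ]
    push_cast
    field_simp
  | succ n ih =>
    have hm : ((m : ℝ) + 1) * ∫ x in (0 : ℝ)..1, x ^ m * (1 - x) ^ (n + 1)
        = ((n : ℝ) + 1) * ∫ x in (0 : ℝ)..1, x ^ (m + 1) * (1 - x) ^ n := by
      have h := integral_eval_mul_eval_derivative ((1 - X) ^ (n + 1)) (X ^ (m + 1)) 0 1
      simpa [derivative_pow, ← intervalIntegral.integral_const_mul, mul_comm, mul_left_comm,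
        mul_assoc] using h
    rw [ih (m + 1), Nat.factorial_succ m, show m + 1 + n + 1 = m + (n + 1) + 1 by ring] at hm
    rw [Nat.factorial_succ n]
    refine mul_left_cancel₀ (by positivity : (m : ℝ) + 1 ≠ 0) (hm.trans ?_)
    push_cast
    ring

theorem add_sq_le_add_mul_div_add_div {x y α β : ℝ} (hα : 0 < α) (hβ : 0 < β) :
    (x + y) ^ 2 ≤ (α + β) * (x ^ 2 / α + y ^ 2 / β) := by
  rw [div_add_div _ _ hα.ne' hβ.ne', mul_div_assoc', le_div_iff₀ (by positivity)]
  nlinarith [sq_nonneg (β * x - α * y)]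

theorem integral_add_sq_of_integral_mul_eq_zero {f g : ℝ → ℝ} {a b : ℝ} (hf : Continuous f)
    (hg : Continuous g) (h : ∫ x in a..b, f x * g x = 0) :
    ∫ x in a..b, (f x + g x) ^ 2 = (∫ x in a..b, f x ^ 2) + ∫ x in a..b, g x ^ 2 := by
  have hexp : ∀ x, (f x + g x) ^ 2 = (f x ^ 2 + 2 * (f x * g x)) + g x ^ 2 := fun x ↦ by ring
  simp_rw [hexp]
  rw [intervalIntegral.integral_add, intervalIntegral.integral_add,
    intervalIntegral.integral_const_mul, h, mul_zero, add_zero]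
  all_goals exact Continuous.intervalIntegrable (by fun_prop) _ _

namespace Polynomial

noncomputable def shiftedLegendreReal (n : ℕ) : ℝ[X] :=
  (shiftedLegendre n).map (Int.castRingHom ℝ)

theorem natDegree_shiftedLegendreReal (n : ℕ) : (shiftedLegendreReal n).natDegree = n := by
  rw [shiftedLegendreReal, natDegree_map_eq_of_injective Int.cast_injective,
    natDegree_shiftedLegendre]

theorem coeff_shiftedLegendreReal (n k : ℕ) :
    (shiftedLegendreReal n).coeff k = (-1) ^ k * n.choose k * (n + k).choose n := by
  simp [shiftedLegendreReal, coeff_shiftedLegendre]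

theorem eval_zero_shiftedLegendreReal (n : ℕ) : (shiftedLegendreReal n).eval 0 = 1 := by
  simp [← coeff_zero_eq_eval_zero, coeff_shiftedLegendreReal]

theorem factorial_mul_shiftedLegendreReal_eq (n : ℕ) :
    (n ! : ℝ[X]) * shiftedLegendreReal n = derivative^[n] (X ^ n * (1 - X) ^ n) := by
  simpa [shiftedLegendreReal, ← iterate_derivative_map] using
    congrArg (map (Int.castRingHom ℝ)) (factorial_mul_shiftedLegendre_eq n)

theorem integral_mul_shiftedLegendreReal (Q : ℝ[X]) (n : ℕ) :
    ∫ x in (0 : ℝ)..1, Q.eval x * (shiftedLegendreReal n).eval x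
      = (-1) ^ n / n ! *
        ∫ x in (0 : ℝ)..1, (derivative^[n] Q).eval x * (x ^ n * (1 - x) ^ n) := by
  have h0 : (X - C 0) ^ n ∣ (X ^ n * (1 - X) ^ n : ℝ[X]) := by simp
  have h1 : (X - C 1) ^ n ∣ (X ^ n * (1 - X) ^ n : ℝ[X]) :=
    dvd_mul_of_dvd_right (pow_dvd_pow_of_dvd (by rw [C_1, dvd_sub_comm]) n) _
  have h := integral_eval_mul_eval_iterate_derivative Q _ h0 h1
  rw [← factorial_mul_shiftedLegendreReal_eq] at h
  simp only [eval_mul, eval_natCast, eval_pow, eval_sub, eval_one, eval_X,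
    mul_left_comm (eval _ Q), intervalIntegral.integral_const_mul] at h
  rw [div_mul_eq_mul_div, eq_div_iff (by positivity), mul_comm, h]

theorem integral_mul_shiftedLegendreReal_eq_zero {Q : ℝ[X]} {n : ℕ} (hQ : Q.natDegree < n) :
    ∫ x in (0 : ℝ)..1, Q.eval x * (shiftedLegendreReal n).eval x = 0 := by
  simp [integral_mul_shiftedLegendreReal, iterate_derivative_eq_zero hQ]

theorem integral_shiftedLegendreReal_sq (n : ℕ) :
    ∫ x in (0 : ℝ)..1, (shiftedLegendreReal n).eval x ^ 2 = 1 / (2 * n + 1) := by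
  simp only [sq, integral_mul_shiftedLegendreReal, iterate_derivative_eq_C_of_natDegree_le
    (natDegree_shiftedLegendreReal n).le, eval_C, intervalIntegral.integral_const_mul,
    integral_pow_mul_one_sub_pow, coeff_shiftedLegendreReal]
  have hchoose : ((n + n).choose n * n ! * n ! : ℝ) = (n + n)! := by
    have h := Nat.choose_mul_factorial_mul_factorial (n.le_add_left n)
    rw [Nat.add_sub_cancel] at h
    exact_mod_cast h
  have hchoose_ne : ((n + n).choose n : ℝ) ≠ 0 := by
    exact_mod_cast (Nat.choose_pos (n.le_add_left n)).ne'
  have hsign : ((-1 : ℝ) ^ n) ^ 2 = 1 := by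
    rw [← pow_mul, mul_comm, pow_mul, neg_one_sq, one_pow]
  rw [Nat.factorial_succ, Nat.choose_self]
  push_cast
  rw [← hchoose]
  field_simp
  linear_combination (2 * (n : ℝ) + 1) * hsign

theorem sq_eval_zero_le_integral_sq (P : ℝ[X]) {p : ℕ} (hP : P.natDegree ≤ p) :
    P.eval 0 ^ 2 ≤ ((p : ℝ) + 1) ^ 2 * ∫ x in (0 : ℝ)..1, P.eval x ^ 2 := by
  induction p generalizing P with
  | zero =>
    rw [eq_C_of_natDegree_le_zero hP]
    simp
  | succ p ih =>
    set L := shiftedLegendreReal (p + 1)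
    set c := P.coeff (p + 1) / L.coeff (p + 1)
    set Q := P - C c * L
    have hQ : Q.natDegree ≤ p :=
      natDegree_sub_C_mul_le_of_natDegree_eq (natDegree_shiftedLegendreReal _) hP
    have hPQ : ∀ x, P.eval x = c * L.eval x + Q.eval x := fun x ↦ by simp [Q]
    have hint : ∫ x in (0 : ℝ)..1, P.eval x ^ 2
        = c ^ 2 / (2 * p + 3) + ∫ x in (0 : ℝ)..1, Q.eval x ^ 2 := by
      simp_rw [hPQ]
      rw [integral_add_sq_of_integral_mul_eq_zero (by fun_prop) (by fun_prop)]
      · simp_rw [mul_pow, intervalIntegral.integral_const_mul, L, integral_shiftedLegendreReal_sq]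
        push_cast
        ring
      · simp_rw [mul_assoc, intervalIntegral.integral_const_mul, mul_comm (L.eval _) (Q.eval _)]
        rw [integral_mul_shiftedLegendreReal_eq_zero (Nat.lt_succ_of_le hQ), mul_zero]
    have hQ0 : Q.eval 0 ^ 2 / ((p : ℝ) + 1) ^ 2 ≤ ∫ x in (0 : ℝ)..1, Q.eval x ^ 2 := by
      rw [div_le_iff₀' (by positivity)]
      exact ih Q hQ
    -- The Cauchy–Schwarz weights `2p + 3` and `(p + 1)²` add up to `(p + 2)²`.
    calc P.eval 0 ^ 2 = (c + Q.eval 0) ^ 2 := by rw [hPQ, eval_zero_shiftedLegendreReal, mul_one]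
      _ ≤ ((2 * p + 3) + ((p : ℝ) + 1) ^ 2) *
          (c ^ 2 / (2 * p + 3) + Q.eval 0 ^ 2 / ((p : ℝ) + 1) ^ 2) :=
        add_sq_le_add_mul_div_add_div (by positivity) (by positivity)
      _ ≤ ((2 * p + 3) + ((p : ℝ) + 1) ^ 2) *
          (c ^ 2 / (2 * p + 3) + ∫ x in (0 : ℝ)..1, Q.eval x ^ 2) := by
        gcongr
      _ = ((↑(p + 1) : ℝ) + 1) ^ 2 * ∫ x in (0 : ℝ)..1, P.eval x ^ 2 := by
        rw [hint]
        push_cast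
        ring

theorem sq_eval_le_mul_integral_sq_div (P : ℝ[X]) {p : ℕ} (hP : P.natDegree ≤ p) (e : ℝ)
    {s : ℝ} (hs : s ≠ 0) :
    P.eval e ^ 2 ≤ ((p : ℝ) + 1) ^ 2 * (∫ x in e..e + s, P.eval x ^ 2) / s := by
  set Q := P.comp (C s * X + C e)
  have hQ : Q.natDegree ≤ p :=
    natDegree_comp_le.trans <| (Nat.mul_le_mul hP natDegree_linear_le).trans_eq (mul_one p)
  have hQint : ∫ x in (0 : ℝ)..1, Q.eval x ^ 2 = (∫ x in e..e + s, P.eval x ^ 2) / s := by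
    simp only [Q, eval_comp, eval_add, eval_mul, eval_C, eval_X]
    rw [intervalIntegral.integral_comp_mul_add (fun x ↦ P.eval x ^ 2) hs, smul_eq_mul,
      inv_mul_eq_div]
    simp [add_comm]
  have h := sq_eval_zero_le_integral_sq Q hQ
  rwa [hQint, show Q.eval 0 = P.eval e by simp [Q], ← mul_div_assoc] at h

theorem sq_eval_mul_le_integral_sq (P : ℝ[X]) {p : ℕ} (hP : P.natDegree ≤ p) {a b t : ℝ}
    (ht : t ∈ Set.Ioo a b) :
    P.eval t ^ 2 * (b - a) ≤ ((p : ℝ) + 1) ^ 2 * ∫ x in a..b, P.eval x ^ 2 := by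
  have hleft : P.eval t ^ 2 * (t - a) ≤ ((p : ℝ) + 1) ^ 2 * ∫ x in a..t, P.eval x ^ 2 := by
    have h := sq_eval_le_mul_integral_sq_div P hP t (sub_ne_zero.mpr ht.1.ne)
    rwa [add_sub_cancel, intervalIntegral.integral_symm, ← neg_sub t a, mul_neg, neg_div_neg_eq,
      le_div_iff₀ (sub_pos.mpr ht.1)] at h
  have hright : P.eval t ^ 2 * (b - t) ≤ ((p : ℝ) + 1) ^ 2 * ∫ x in t..b, P.eval x ^ 2 := by
    have h := sq_eval_le_mul_integral_sq_div P hP t (sub_ne_zero.mpr ht.2.ne')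
    rwa [add_sub_cancel, le_div_iff₀ (sub_pos.mpr ht.2)] at h
  have hint : ∀ u v, IntervalIntegrable (fun x ↦ P.eval x ^ 2) MeasureTheory.volume u v :=
    fun u v ↦ (P.continuous.pow 2).intervalIntegrable u v
  calc P.eval t ^ 2 * (b - a) = P.eval t ^ 2 * (t - a) + P.eval t ^ 2 * (b - t) := by ring
    _ ≤ ((p : ℝ) + 1) ^ 2 * (∫ x in a..t, P.eval x ^ 2)
        + ((p : ℝ) + 1) ^ 2 * ∫ x in t..b, P.eval x ^ 2 := add_le_add hleft hright
    _ = ((p : ℝ) + 1) ^ 2 * ∫ x in a..b, P.eval x ^ 2 := by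
      rw [← mul_add, intervalIntegral.integral_add_adjacent_intervals (hint a t) (hint t b)]

end Polynomial

theorem stmt_0_general (p : ℕ) (a b : ℝ) (P : Polynomial ℝ)
    (hdeg : P.natDegree ≤ p) :
    ∀ t ∈ Set.Ioo a b,
      |P.eval t| ≤ ((p : ℝ) + 1) / Real.sqrt (b - a) *
        Real.sqrt (∫ s in Set.Ioo a b, (P.eval s) ^ 2) := by
  intro t ht
  have hab : a < b := ht.1.trans ht.2
  rw [← MeasureTheory.integral_Ioc_eq_integral_Ioo, ← intervalIntegral.integral_of_le hab.le]
  calc |P.eval t| ≤ √(((p : ℝ) + 1) ^ 2 / (b - a) * ∫ x in a..b, P.eval x ^ 2) := by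
        refine Real.abs_le_sqrt ?_
        rw [div_mul_eq_mul_div, le_div_iff₀ (sub_pos.mpr hab)]
        exact P.sq_eval_mul_le_integral_sq hdeg ht
    _ = ((p : ℝ) + 1) / √(b - a) * √(∫ x in a..b, P.eval x ^ 2) := by
        rw [Real.sqrt_mul (by positivity), Real.sqrt_div (by positivity),
          Real.sqrt_sq (by positivity)]

/-- Inverse inequality for polynomials on a bounded interval `T = (a,b)`:
the sup-norm of a polynomial of degree at most `p` on `T` is bounded by
`(p+1)/√(b-a)` times its `L²` norm on `T`. -/
theorem stmt_0 (p : ℕ) (a b : ℝ) (hab : a < b) (P : Polynomial ℝ)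
    (hdeg : P.natDegree ≤ p) :
    ∀ t ∈ Set.Ioo a b,
      |P.eval t| ≤ ((p : ℝ) + 1) / Real.sqrt (b - a) *
        Real.sqrt (∫ s in Set.Ioo a b, (P.eval s) ^ 2) :=
  stmt_0_general p a b P hdeg
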